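/- arXiv:2311.15868 — 3 statements merged into one kernel-verified Lean document; each statement's English description precedes it below -/
import Mathlib

section
/- Let $G = \mathbb{Z}_m \ltimes \mathbb{Z}_n = \langle s, t : s^m = t^n = 1, sts^{-1} = t^{-1}\rangle$ with $m$ even, and let $I$ be a right ideal of $\mathbb{Z}[G]$ viewed as a lattice $\mathcal{I} \subset \mathbb{R}^{mn}$ under coefficient embedding. Define the permutation $\pi$ of coordinates by sending the coordinate indexed by $s^i t^j$ to the coordinate indexed by $s^{-i} t^{(-1)^{i+1} j}$ (indices mod $m$ and $n$). Then for $x \in \mathbb{Q}[G]$ with coefficient vector $\mathbf{x}$: $x \in I^{-1}$ (i.e., $xy \in \mathbb{Z}[G]$ for all $y \in I$) if and only if $\pi(\mathbf{x})$ lies in the dual lattice $\mathcal{I}^{\vee}$. -/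
/-- Elements of `ℚ[G]` for `G = ℤ_m ⋉ ℤ_n = ⟨s,t : s^m = t^n = 1, s t s⁻¹ = t⁻¹⟩` are
represented by their coefficient vectors indexed by `(i,j) ↔ s^i t^j`.  Multiplication in
the group ring: since `s^i t^j · s^{i'} t^{j'} = s^{i+i'} t^{(-1)^{i'} j + j'}`, the
coefficient of the product at `(a,b)` is
`∑_{(i,j)} x_{i,j} · y_{a-i, b - (-1)^{a-i} j}`. -/
def grMul (m n : ℕ) [NeZero m] [NeZero n]
    (x y : ZMod m × ZMod n → ℚ) : ZMod m × ZMod n → ℚ :=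
  fun ab => ∑ p : ZMod m × ZMod n,
    x p * y (ab.1 - p.1, ab.2 - ((-1 : ℤ) ^ (ab.1 - p.1).val) • p.2)

/-- A vector has integer coordinates (i.e. lies in `ℤ[G]`). -/
def isIntVec (m n : ℕ) (x : ZMod m × ZMod n → ℚ) : Prop :=
  ∀ p, ∃ z : ℤ, x p = (z : ℚ)

/-- The coordinate permutation `π` sending the coordinate indexed by `s^i t^j` to the one
indexed by `s^{-i} t^{(-1)^{i+1} j}`: `(π x)_{a,b} = x_{-a, (-1)^{a+1} b}`. -/
def permVec (m n : ℕ) [NeZero m] [NeZero n]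
    (x : ZMod m × ZMod n → ℚ) : ZMod m × ZMod n → ℚ :=
  fun ab => x (-ab.1, ((-1 : ℤ) ^ (ab.1.val + 1)) • ab.2)

/-- Indicator (delta) vector at a group element. -/
def deltaVec (m n : ℕ) [NeZero m] [NeZero n] (c : ZMod m × ZMod n) :
    ZMod m × ZMod n → ℚ :=
  fun q => if q = c then 1 else 0

lemma deltaVec_int (m n : ℕ) [NeZero m] [NeZero n] (c : ZMod m × ZMod n) :
    isIntVec m n (deltaVec m n c) := by
  intro p
  by_cases h : p = c
  · exact ⟨1, by simp [deltaVec, h]⟩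
  · exact ⟨0, by simp [deltaVec, h]⟩

lemma negOnePow_parity {R : Type*} [Monoid R] [HasDistribNeg R] {x y : ℕ}
    (h : x % 2 = y % 2) : (-1 : R) ^ x = (-1) ^ y := by
  rcases Nat.even_or_odd x with hx | hx
  · have hy : Even y := by rw [Nat.even_iff] at hx ⊢; omega
    rw [hx.neg_one_pow, hy.neg_one_pow]
  · have hy : Odd y := by rw [Nat.odd_iff] at hx ⊢; omega
    rw [hx.neg_one_pow, hy.neg_one_pow]

lemma val_add_par (m : ℕ) [NeZero m] (hme : Even m) (a b : ZMod m) :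
    (a + b).val % 2 = (a.val + b.val) % 2 := by
  rw [ZMod.val_add, Nat.mod_mod_of_dvd _ hme.two_dvd]

lemma val_sub_par (m : ℕ) [NeZero m] (hme : Even m) (a b : ZMod m) :
    (a - b).val % 2 = (a.val + b.val) % 2 := by
  have h := val_add_par m hme (a - b) b
  rw [sub_add_cancel] at h
  omega

lemma val_neg_par (m : ℕ) [NeZero m] (hme : Even m) (a : ZMod m) :
    (-a).val % 2 = a.val % 2 := by
  have h := val_sub_par m hme 0 a
  rw [zero_sub, ZMod.val_zero] at h
  omega

lemma eps_sq {R : Type*} [Monoid R] [HasDistribNeg R] (k : ℕ) :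
    (-1 : R) ^ k * (-1 : R) ^ k = 1 := by
  rw [← pow_add]
  have h : Even (k + k) := ⟨k, rfl⟩
  exact h.neg_one_pow

lemma smul_eps_eps (n : ℕ) [NeZero n] (k : ℕ) (x : ZMod n) :
    ((-1 : ℤ) ^ k) • ((-1 : ℤ) ^ k) • x = x := by
  rw [smul_smul, eps_sq, one_smul]

lemma grMul_delta (m n : ℕ) [NeZero m] [NeZero n] (c : ZMod m × ZMod n)
    (y : ZMod m × ZMod n → ℚ) (q : ZMod m × ZMod n) :
    grMul m n y (deltaVec m n c) q
      = y (q.1 - c.1, ((-1 : ℤ) ^ c.1.val) • (q.2 - c.2)) := by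
  unfold grMul deltaVec
  rw [Finset.sum_eq_single (q.1 - c.1, ((-1 : ℤ) ^ c.1.val) • (q.2 - c.2))]
  · have h1 : q.1 - (q.1 - c.1) = c.1 := sub_sub_cancel _ _
    simp only [h1, smul_eps_eps, sub_sub_cancel]
    simp
  · intro p _ hp
    rw [if_neg, mul_zero]
    intro h
    apply hp
    have h1 : q.1 - p.1 = c.1 := congrArg Prod.fst h
    have h2 : q.2 - ((-1 : ℤ) ^ (q.1 - p.1).val) • p.2 = c.2 := congrArg Prod.snd h
    rw [h1] at h2
    have hp1 : p.1 = q.1 - c.1 := by rw [← h1]; ring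
    have h3 : ((-1 : ℤ) ^ c.1.val) • p.2 = q.2 - c.2 := by
      rw [← h2]
      generalize ((-1 : ℤ) ^ c.1.val) • p.2 = s
      rw [sub_sub_cancel]
    have hp2 : p.2 = ((-1 : ℤ) ^ c.1.val) • (q.2 - c.2) := by
      rw [← h3]
      exact (smul_eps_eps n c.1.val p.2).symm
    exact Prod.ext hp1 hp2
  · intro h
    exact absurd (Finset.mem_univ _) h

lemma key_identity (m n : ℕ) [NeZero m] [NeZero n] (hme : Even m)
    (x y : ZMod m × ZMod n → ℚ) (ab : ZMod m × ZMod n) :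
    grMul m n x y ab
      = ∑ p : ZMod m × ZMod n, permVec m n x p *
          grMul m n y
            (deltaVec m n (-ab.1, -(((-1 : ℤ) ^ ab.1.val) • ab.2))) p := by
  set σ : ZMod m × ZMod n → ZMod m × ZMod n :=
    fun q => (-q.1, ((-1 : ℤ) ^ (q.1.val + 1)) • q.2) with hσdef
  have hσ : Function.Involutive σ := by
    intro q
    refine Prod.ext (neg_neg _) ?_
    show ((-1 : ℤ) ^ ((-q.1).val + 1)) • ((-1 : ℤ) ^ (q.1.val + 1)) • q.2 = q.2
    rw [smul_smul, ← pow_add]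
    have hpar : ((-q.1).val + 1 + (q.1.val + 1)) % 2 = 0 := by
      have := val_neg_par m hme q.1; omega
    rw [(Nat.even_iff.mpr hpar).neg_one_pow, one_smul]
  set g : ZMod m × ZMod n → ℚ := fun p => permVec m n x p *
      grMul m n y (deltaVec m n (-ab.1, -(((-1 : ℤ) ^ ab.1.val) • ab.2))) p with hgdef
  have hreix : ∑ q : ZMod m × ZMod n, g (σ q) = ∑ p : ZMod m × ZMod n, g p :=
    Fintype.sum_bijective σ hσ.bijective _ _ (fun q => rfl)
  rw [← hreix]
  unfold grMul
  refine Finset.sum_congr rfl (fun q _ => ?_)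
  have hx : permVec m n x (σ q) = x q := congrArg x (hσ q)
  rw [hgdef]
  simp only []
  rw [hx, grMul_delta]
  refine congrArg (fun t => x q * y t) (Prod.ext ?_ ?_)
  · show ab.1 - q.1 = (σ q).1 - (-ab.1)
    rw [hσdef]
    simp only []
    ring
  · show ab.2 - ((-1 : ℤ) ^ (ab.1 - q.1).val) • q.2
        = ((-1 : ℤ) ^ (-ab.1).val) • ((σ q).2 - (-(((-1 : ℤ) ^ ab.1.val) • ab.2)))
    rw [hσdef]
    simp only [zsmul_eq_mul]
    push_cast
    have e1 : (-1 : ZMod n) ^ ((-ab.1).val) = (-1) ^ (ab.1.val) :=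
      negOnePow_parity (val_neg_par m hme ab.1)
    have e2 : (-1 : ZMod n) ^ ((ab.1 - q.1).val) = (-1) ^ (ab.1.val + q.1.val) :=
      negOnePow_parity (val_sub_par m hme ab.1 q.1)
    rw [e1, e2, pow_succ, pow_add]
    have hsq : (-1 : ZMod n) ^ ab.1.val * (-1 : ZMod n) ^ ab.1.val = 1 := eps_sq _
    linear_combination (-ab.2) * hsq

/-- **Dual lattice vs. inverse ideal for Type I groups.**  Let
`G = ℤ_m ⋉ ℤ_n` with `m` even, and let `I` be a right ideal of `ℤ[G]` viewed (via
coefficient embedding) as a set of integer vectors.  For `x ∈ ℚ[G]`: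
`x ∈ I⁻¹` (i.e. `x·y ∈ ℤ[G]` for all `y ∈ I`) if and only if `π(x)` lies in the dual
lattice `I^∨ = {z : ⟨z,y⟩ ∈ ℤ for all y ∈ I}`. -/
theorem typeI_inverse_iff_perm_mem_dual (m n : ℕ) [NeZero m] [NeZero n]
    (hme : Even m)
    (I : Set (ZMod m × ZMod n → ℚ))
    (hint : ∀ y ∈ I, isIntVec m n y)
    (hadd : ∀ y ∈ I, ∀ y' ∈ I, y + y' ∈ I)
    (hneg : ∀ y ∈ I, -y ∈ I)
    (hright : ∀ y ∈ I, ∀ r : ZMod m × ZMod n → ℚ, isIntVec m n r → grMul m n y r ∈ I)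
    (x : ZMod m × ZMod n → ℚ) :
    (∀ y ∈ I, isIntVec m n (grMul m n x y)) ↔
      (∀ y ∈ I, ∃ z : ℤ, ∑ p : ZMod m × ZMod n, permVec m n x p * y p = (z : ℚ)) := by
  constructor
  · intro h y hy
    have hk := key_identity m n hme x y (0, 0)
    have hδ : grMul m n y (deltaVec m n (-(0, 0).1, -(((-1 : ℤ) ^ ((0,0) : ZMod m × ZMod n).1.val) • ((0,0) : ZMod m × ZMod n).2))) = y := by
      funext q
      rw [grMul_delta]
      simp [ZMod.val_zero]
    rw [hδ] at hk
    obtain ⟨z, hz⟩ := h y hy (0, 0)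
    exact ⟨z, by rw [← hk, hz]⟩
  · intro h y hy ab
    have hy' := hright y hy _ (deltaVec_int m n (-ab.1, -(((-1 : ℤ) ^ ab.1.val) • ab.2)))
    obtain ⟨z, hz⟩ := h _ hy'
    exact ⟨z, by rw [key_identity m n hme x y ab]; exact hz⟩
end

section
/- For reals $0 < \alpha < \beta \leq 2\alpha$, the total variation (statistical) distance between the one-dimensional centered Gaussian distributions with density proportional to $\exp(-\pi x^2/\alpha^2)$ and $\exp(-\pi x^2/\beta^2)$ is at most $10(\beta/\alpha - 1)$. -/
open MeasureTheory Real

lemma gauss_int (r : ℝ) (hr : 0 < r) :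
    ∫ x : ℝ, Real.exp (-Real.pi * x ^ 2 / r ^ 2) = r := by
  have h : ∀ x : ℝ, -Real.pi * x ^ 2 / r ^ 2 = -(Real.pi / r ^ 2) * x ^ 2 := by
    intro x; ring
  simp_rw [h]
  rw [integral_gaussian]
  have hπ : (0:ℝ) < Real.pi := Real.pi_pos
  have : Real.pi / (Real.pi / r ^ 2) = r ^ 2 := by field_simp
  rw [this, Real.sqrt_sq hr.le]

lemma gauss_integrable (r : ℝ) (hr : 0 < r) :
    Integrable (fun x : ℝ => Real.exp (-Real.pi * x ^ 2 / r ^ 2)) := by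
  have h : ∀ x : ℝ, -Real.pi * x ^ 2 / r ^ 2 = -(Real.pi / r ^ 2) * x ^ 2 := by
    intro x; ring
  simp_rw [h]
  exact integrable_exp_neg_mul_sq (by positivity)

/-- For reals `0 < α < β ≤ 2α`, the statistical (total variation) distance between the
one-dimensional centered Gaussians `D_α` and `D_β`, with densities
`x ↦ r⁻¹ exp(-π x²/r²)`, is at most `10 (β/α - 1)`. -/
theorem gaussian_statistical_distance_le (α β : ℝ)
    (h0 : 0 < α) (hab : α < β) (hb : β ≤ 2 * α) :
    (1 / 2) * ∫ x : ℝ,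
        |α⁻¹ * Real.exp (-Real.pi * x ^ 2 / α ^ 2) -
          β⁻¹ * Real.exp (-Real.pi * x ^ 2 / β ^ 2)| ≤
      10 * (β / α - 1) := by
  have hb0 : 0 < β := h0.trans hab
  set eα : ℝ → ℝ := fun x => Real.exp (-Real.pi * x ^ 2 / α ^ 2) with heα
  set eβ : ℝ → ℝ := fun x => Real.exp (-Real.pi * x ^ 2 / β ^ 2) with heβ
  have hieα := gauss_integrable α h0
  have hieβ := gauss_integrable β hb0
  -- pointwise bound
  have hpt : ∀ x : ℝ, |α⁻¹ * eα x - β⁻¹ * eβ x| ≤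
      (α⁻¹ - β⁻¹) * eα x + β⁻¹ * eβ x - β⁻¹ * eα x := by
    intro x
    have h1 : eα x ≤ eβ x := by
      apply Real.exp_le_exp.2
      have hx : (0:ℝ) ≤ Real.pi * x ^ 2 := by positivity
      rw [div_le_div_iff₀ (by positivity) (by positivity)]
      nlinarith [mul_nonneg hx (sub_nonneg.2 (pow_le_pow_left₀ h0.le hab.le 2))]
    have h2 : 0 < eα x := Real.exp_pos _
    have h3 : (0:ℝ) ≤ α⁻¹ - β⁻¹ := by
      have : β⁻¹ ≤ α⁻¹ := inv_anti₀ h0 hab.le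
      linarith
    have hb' : (0:ℝ) < β⁻¹ := by positivity
    rw [abs_le]
    constructor <;> nlinarith [mul_nonneg h3 h2.le, mul_nonneg hb'.le (sub_nonneg.2 h1)]
  -- integrability
  have hif : Integrable (fun x : ℝ => |α⁻¹ * eα x - β⁻¹ * eβ x|) :=
    ((hieα.const_mul α⁻¹).sub (hieβ.const_mul β⁻¹)).abs
  have hA : Integrable (fun x : ℝ => (α⁻¹ - β⁻¹) * eα x + β⁻¹ * eβ x) :=
    (hieα.const_mul _).add (hieβ.const_mul _)
  have hih : Integrable (fun x : ℝ =>
      (α⁻¹ - β⁻¹) * eα x + β⁻¹ * eβ x - β⁻¹ * eα x) :=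
    hA.sub (hieα.const_mul _)
  have hmono : (∫ x : ℝ, |α⁻¹ * eα x - β⁻¹ * eβ x|) ≤
      ∫ x : ℝ, ((α⁻¹ - β⁻¹) * eα x + β⁻¹ * eβ x - β⁻¹ * eα x) :=
    integral_mono hif hih hpt
  have hval : (∫ x : ℝ, ((α⁻¹ - β⁻¹) * eα x + β⁻¹ * eβ x - β⁻¹ * eα x))
      = (α⁻¹ - β⁻¹) * α + β⁻¹ * β - β⁻¹ * α := by
    rw [integral_sub hA (hieα.const_mul β⁻¹),
      integral_add (hieα.const_mul _) (hieβ.const_mul _),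
      integral_const_mul, integral_const_mul, integral_const_mul,
      gauss_int α h0, gauss_int β hb0]
  have hfin : (α⁻¹ - β⁻¹) * α + β⁻¹ * β - β⁻¹ * α = 2 - 2 * (α / β) := by
    field_simp; ring
  have e3 : (β - α) / β ≤ (β - α) / α :=
    div_le_div_of_nonneg_left (by linarith) h0 hab.le
  have e4 : 1 - α / β = (β - α) / β := by field_simp
  have e5 : β / α - 1 = (β - α) / α := by field_simp
  have e6 : 0 ≤ (β - α) / α := div_nonneg (by linarith) h0.le
  have hmono' : (∫ x : ℝ, |α⁻¹ * eα x - β⁻¹ * eβ x|) ≤ 2 - 2 * (α / β) := by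
    rw [hval, hfin] at hmono; exact hmono
  linarith [hmono']
end

section
/- Let $\mathcal{L}$ be a full-rank lattice in $\mathbb{R}^n$ and let $\varepsilon = 2^{-2n}$. Then the smoothing parameter satisfies $\eta_{\varepsilon}(\mathcal{L}) \leq \sqrt{n}/\lambda_1(\mathcal{L}^{\vee})$, i.e., for $s = \sqrt{n}/\lambda_1(\mathcal{L}^{\vee})$ one has $\sum_{y \in \mathcal{L}^{\vee}\setminus\{0\}} \exp(-\pi s^2 \|y\|^2) \leq 2^{-2n}$. -/
/-!
Put `s = √n / λ₁`. Sort the nonzero dual vectors `y` into shells by `k = ⌊‖y‖ / λ₁⌋ ≥ 1`. Dual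
vectors are `λ₁`-separated, so the balls of radius `λ₁ / 2` around the vectors of shell `k` are
disjoint and lie in a ball of radius `(k + 3/2) λ₁`; comparing volumes, shell `k` has at most
`(2k + 3)ⁿ ≤ (5k)ⁿ` points, each of Gaussian weight at most `exp (-π k²)ⁿ`. Hence the sum is at
most `∑ₖ (5k e^{-πk²})ⁿ = 4⁻ⁿ ∑ₖ (20k e^{-πk²})ⁿ ≤ 4⁻ⁿ ∑ₖ 20k e^{-πk²} ≤ 4⁻ⁿ`, the last step
because `e^{-πk²} ≤ e^{-πk}` and `20 ∑ₖ k e^{-πk} = 20 e^{-π} / (1 - e^{-π})² < 1`.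
-/

open Real Finset Metric MeasureTheory Module Matrix

theorem card_le_of_separated_of_norm_le {E : Type*} [NormedAddCommGroup E] [NormedSpace ℝ E]
    [FiniteDimensional ℝ E] {r R : ℝ} (hr : 0 < r) (hR : 0 ≤ R) {S : Finset E}
    (hsep : (S : Set E).Pairwise fun p q => r ≤ dist p q) (hS : ∀ p ∈ S, ‖p‖ ≤ R) :
    (#S : ℝ) ≤ (1 + 2 * R / r) ^ finrank ℝ E := by
  borelize E
  set μ : Measure E := Measure.addHaar
  have hball (x : E) {ρ : ℝ} (hρ : 0 < ρ) :
      μ (ball x ρ) = ENNReal.ofReal (ρ ^ finrank ℝ E) * μ (ball 0 1) :=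
    Measure.addHaar_ball_of_pos μ x hρ
  have hdisj : (S : Set E).PairwiseDisjoint fun p => ball p (r / 2) := fun p hp q hq hpq =>
    ball_disjoint_ball (by linarith [hsep hp hq hpq])
  have hsub : (⋃ p ∈ S, ball p (r / 2)) ⊆ ball 0 (R + r / 2) := by
    simp only [Set.iUnion_subset_iff]
    intro p hp x hx
    rw [mem_ball, dist_zero_right] at *
    linarith [norm_le_norm_add_norm_sub' x p, hS p hp, dist_eq_norm x p]
  have hvol : #S * μ (ball 0 (r / 2)) ≤ μ (ball 0 (R + r / 2)) := by
    calc #S * μ (ball 0 (r / 2)) = ∑ p ∈ S, μ (ball p (r / 2)) := by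
          simp only [hball _ (half_pos hr), sum_const, nsmul_eq_mul]
      _ = μ (⋃ p ∈ S, ball p (r / 2)) :=
          (measure_biUnion_finset hdisj fun _ _ => measurableSet_ball).symm
      _ ≤ μ (ball 0 (R + r / 2)) := measure_mono hsub
  rw [hball 0 (half_pos hr), hball 0 (by positivity : 0 < R + r / 2), ← mul_assoc,
    ENNReal.mul_le_mul_iff_left (measure_ball_pos μ _ one_pos).ne' measure_ball_lt_top.ne,
    ← ENNReal.ofReal_natCast, ← ENNReal.ofReal_mul (by positivity),
    ENNReal.ofReal_le_ofReal_iff (by positivity)] at hvol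
  have hrad : R + r / 2 = (1 + 2 * R / r) * (r / 2) := by field_simp; ring
  rwa [hrad, mul_pow, mul_le_mul_iff_left₀ (by positivity)] at hvol

theorem exp_neg_pi_le_one_div_22 : exp (-π) ≤ 1 / 22 := by
  have he : (2.7182818283 : ℝ) ^ 3 ≤ exp 3 := by
    rw [show (3 : ℝ) = (3 : ℕ) * 1 by norm_num, exp_nat_mul]
    exact pow_le_pow_left₀ (by norm_num) exp_one_gt_d9.le 3
  have hsmall : (1.14 : ℝ) ≤ exp (π - 3) := by linarith [add_one_le_exp (π - 3), pi_gt_d2]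
  have : (22 : ℝ) ≤ exp π := by
    calc (22 : ℝ) ≤ 2.7182818283 ^ 3 * 1.14 := by norm_num
      _ ≤ exp 3 * exp (π - 3) := by gcongr
      _ = exp π := by rw [← exp_add]; ring_nf
  rw [exp_neg, inv_eq_one_div]
  gcongr

theorem sum_natCast_mul_exp_neg_pi_mul_sq_le (K : Finset ℕ) :
    ∑ k ∈ K, (k : ℝ) * exp (-π * k ^ 2) ≤ 1 / 20 := by
  set q := exp (-π)
  have hq : 0 < q := exp_pos _
  have hq22 : q ≤ 1 / 22 := exp_neg_pi_le_one_div_22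
  have hterm (k : ℕ) : (k : ℝ) * exp (-π * k ^ 2) ≤ k * q ^ k := by
    rw [← exp_nat_mul]
    gcongr _ * exp ?_
    have : (k : ℝ) ≤ k ^ 2 := by exact_mod_cast Nat.le_self_pow two_ne_zero k
    nlinarith [pi_pos]
  have hq1 : ‖q‖ < 1 := by rw [norm_of_nonneg hq.le]; linarith
  calc ∑ k ∈ K, (k : ℝ) * exp (-π * k ^ 2)
      ≤ ∑ k ∈ K, (k : ℝ) * q ^ k := sum_le_sum fun k _ => hterm k
    _ ≤ ∑' k : ℕ, (k : ℝ) * q ^ k :=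
      (hasSum_coe_mul_geometric_of_norm_lt_one hq1).summable.sum_le_tsum K fun k _ => by positivity
    _ = q / (1 - q) ^ 2 := tsum_coe_mul_geometric_of_norm_lt_one hq1
    _ ≤ 1 / 20 := by
      rw [div_le_div_iff₀ (by nlinarith) (by norm_num)]
      nlinarith

theorem sum_five_mul_exp_neg_pi_mul_sq_pow_le {n : ℕ} (hn : n ≠ 0) (K : Finset ℕ) :
    ∑ k ∈ K, (5 * k * exp (-π * k ^ 2)) ^ n ≤ (1 / 4) ^ n := by
  have hsum := sum_natCast_mul_exp_neg_pi_mul_sq_le K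
  have hle_one (k : ℕ) : 20 * k * exp (-π * k ^ 2) ≤ 1 := by
    have := sum_natCast_mul_exp_neg_pi_mul_sq_le {k}
    rw [sum_singleton] at this
    linarith
  calc ∑ k ∈ K, (5 * k * exp (-π * k ^ 2)) ^ n
      = ∑ k ∈ K, (1 / 4) ^ n * (20 * k * exp (-π * k ^ 2)) ^ n := by
        refine sum_congr rfl fun k _ => ?_
        rw [← mul_pow]
        ring_nf
    _ ≤ ∑ k ∈ K, (1 / 4) ^ n * (20 * k * exp (-π * k ^ 2)) := by
        gcongr with k
        exact pow_le_of_le_one (by positivity) (hle_one k) hn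
    _ = (1 / 4) ^ n * (20 * ∑ k ∈ K, k * exp (-π * k ^ 2)) := by
        simp only [mul_sum, mul_assoc]
    _ ≤ (1 / 4) ^ n := by
        nlinarith [hsum, pow_pos (by norm_num : (0 : ℝ) < 1 / 4) n]

theorem exp_neg_pi_mul_sq_le_exp_neg_pi_mul_floor_sq_pow (n : ℕ) {t : ℝ} (ht : 0 ≤ t) :
    exp (-π * n * t ^ 2) ≤ exp (-π * ⌊t⌋₊ ^ 2) ^ n := by
  rw [← exp_nat_mul, exp_le_exp]
  have : (⌊t⌋₊ : ℝ) ^ 2 ≤ t ^ 2 := by gcongr; exact Nat.floor_le ht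
  nlinarith [mul_nonneg (mul_nonneg pi_pos.le n.cast_nonneg) (sub_nonneg.2 this)]

section LatticeEmbedding

variable {A E : Type*} [AddCommGroup A] [NormedAddCommGroup E] [NormedSpace ℝ E]
  [FiniteDimensional ℝ E] {φ : A →+ E} {r : ℝ}

theorem card_le_of_forall_norm_le (hr : 0 < r) (hmin : ∀ a ≠ 0, r ≤ ‖φ a‖) {R : ℝ} (hR : 0 ≤ R)
    (G : Finset A) (hG : ∀ a ∈ G, ‖φ a‖ ≤ R) : (#G : ℝ) ≤ (1 + 2 * R / r) ^ finrank ℝ E := by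
  classical
  have hsep {a b : A} (hab : a ≠ b) : r ≤ dist (φ a) (φ b) := by
    rw [dist_eq_norm, ← map_sub]
    exact hmin _ (sub_ne_zero.2 hab)
  have hinj : Function.Injective φ := fun a b hab => by
    by_contra hne
    linarith [hsep hne, dist_eq_zero.2 hab]
  rw [← card_image_of_injective G hinj]
  refine card_le_of_separated_of_norm_le hr hR ?_ (by simpa using hG)
  rw [coe_image]
  rintro _ ⟨a, -, rfl⟩ _ ⟨b, -, rfl⟩ hne
  exact hsep fun hab => hne (congrArg φ hab)

theorem sum_exp_neg_pi_mul_sq_le (hd : finrank ℝ E ≠ 0) (hr : 0 < r)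
    (hmin : ∀ a ≠ 0, r ≤ ‖φ a‖) (G : Finset A) (hG : (0 : A) ∉ G) :
    ∑ a ∈ G, exp (-π * (√(finrank ℝ E) / r) ^ 2 * ‖φ a‖ ^ 2) ≤ (1 / 4) ^ finrank ℝ E := by
  classical
  set d := finrank ℝ E
  set shell : A → ℕ := fun a => ⌊‖φ a‖ / r⌋₊
  have hexp (a : A) : (√d / r) ^ 2 * ‖φ a‖ ^ 2 = d * (‖φ a‖ / r) ^ 2 := by
    rw [div_pow, sq_sqrt d.cast_nonneg]; ring
  have hshell_pos : ∀ a ∈ G, 1 ≤ shell a := fun a ha => Nat.le_floor <| by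
    rw [Nat.cast_one, one_le_div hr]
    exact hmin a (ne_of_mem_of_not_mem ha hG)
  have hcard : ∀ k ∈ G.image shell, (#{a ∈ G | shell a = k} : ℝ) ≤ (5 * k) ^ d := by
    intro k hk
    obtain ⟨a₀, ha₀, rfl⟩ := mem_image.1 hk
    have hone : (1 : ℝ) ≤ shell a₀ := by exact_mod_cast hshell_pos a₀ ha₀
    have hR : 0 ≤ (shell a₀ + 1) * r := by positivity
    refine (card_le_of_forall_norm_le hr hmin hR _ fun a ha => ?_).trans ?_
    · rw [(mem_filter.1 ha).2.symm, ← div_le_iff₀ hr]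
      exact (Nat.lt_floor_add_one _).le
    · gcongr
      rw [mul_div_assoc, mul_div_cancel_right₀ _ hr.ne']
      linarith
  calc ∑ a ∈ G, exp (-π * (√d / r) ^ 2 * ‖φ a‖ ^ 2)
      ≤ ∑ a ∈ G, exp (-π * shell a ^ 2) ^ d := by
        gcongr with a
        rw [mul_assoc, hexp, ← mul_assoc]
        exact exp_neg_pi_mul_sq_le_exp_neg_pi_mul_floor_sq_pow d (by positivity)
    _ = ∑ k ∈ G.image shell, #{a ∈ G | shell a = k} • exp (-π * k ^ 2) ^ d :=
        sum_comp (fun k : ℕ => exp (-π * k ^ 2) ^ d) shell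
    _ ≤ ∑ k ∈ G.image shell, (5 * k * exp (-π * k ^ 2)) ^ d := by
        gcongr with k hk
        rw [nsmul_eq_mul, mul_pow]
        gcongr
        exact hcard k hk
    _ ≤ (1 / 4) ^ d := sum_five_mul_exp_neg_pi_mul_sq_pow_le hd _

theorem tsum_exp_neg_pi_mul_sq_le (hd : finrank ℝ E ≠ 0) (hr : 0 < r)
    (hmin : ∀ a ≠ 0, r ≤ ‖φ a‖) :
    ∑' a : {a : A // a ≠ 0}, exp (-π * (√(finrank ℝ E) / r) ^ 2 * ‖φ a‖ ^ 2) ≤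
      (1 / 4) ^ finrank ℝ E :=
  tsum_le_of_sum_le' (by positivity) fun F => by
    simpa using sum_exp_neg_pi_mul_sq_le hd hr hmin (F.map (Function.Embedding.subtype _))
      (by simp)

end LatticeEmbedding

noncomputable def dualLatticeMap {n : ℕ} (B : Matrix (Fin n) (Fin n) ℝ) :
    (Fin n → ℤ) →+ EuclideanSpace ℝ (Fin n) where
  toFun z := WithLp.toLp 2 (B⁻¹ᵀ *ᵥ fun i => (z i : ℝ))
  map_zero' := by simp only [Pi.zero_apply, Int.cast_zero]; exact congrArg _ (mulVec_zero _)
  map_add' z w := by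
    simp only [Pi.add_apply, Int.cast_add]
    rw [← WithLp.toLp_add, ← mulVec_add]
    rfl

theorem norm_dualLatticeMap_sq {n : ℕ} (B : Matrix (Fin n) (Fin n) ℝ) (z : Fin n → ℤ) :
    ‖dualLatticeMap B z‖ ^ 2 = ∑ i, (B⁻¹ᵀ *ᵥ fun i => (z i : ℝ)) i ^ 2 := by
  simp [dualLatticeMap, EuclideanSpace.norm_sq_eq]

theorem dualLatticeMap_injective {n : ℕ} {B : Matrix (Fin n) (Fin n) ℝ} (hB : IsUnit B.det) :
    Function.Injective (dualLatticeMap B) := by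
  have hcast : Function.Injective fun (z : Fin n → ℤ) i => (z i : ℝ) :=
    fun z w h => funext fun i => Int.cast_injective (congrFun h i)
  have hmul : Function.Injective (B⁻¹ᵀ *ᵥ ·) := mulVec_injective_iff_isUnit.2 <| by
    rw [isUnit_iff_isUnit_det, det_transpose]
    exact isUnit_nonsing_inv_det B hB
  exact (WithLp.toLp_injective 2).comp (hmul.comp hcast)

/-- **Smoothing parameter bound.**  Let `𝓛 = B ℤⁿ` be a full-rank lattice in `ℝⁿ`
(`B ∈ GLₙ(ℝ)`), so that its dual lattice is `B⁻ᵀ ℤⁿ`.  Let `λ₁` be the minimum `ℓ₂`-norm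
of a nonzero dual lattice vector.  Then `η_{2^{-2n}}(𝓛) ≤ √n / λ₁`: that is, for
`s = √n / λ₁` one has `∑_{y ∈ 𝓛^∨ \ {0}} exp(-π s² ‖y‖²) ≤ 2^{-2n}`. -/
theorem smoothing_parameter_le (n : ℕ) (hn : 0 < n)
    (B : Matrix (Fin n) (Fin n) ℝ) (hB : IsUnit B.det)
    (lam : ℝ)
    (hlam : IsLeast {r : ℝ | ∃ z : Fin n → ℤ, z ≠ 0 ∧
        Real.sqrt (∑ i, (B⁻¹.transpose.mulVec (fun i => (z i : ℝ)) i) ^ 2) = r} lam) :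
    ∑' z : {z : Fin n → ℤ // z ≠ 0},
        Real.exp (-Real.pi * (Real.sqrt n / lam) ^ 2 *
          ∑ i, (B⁻¹.transpose.mulVec (fun i => ((z : Fin n → ℤ) i : ℝ)) i) ^ 2) ≤
      ((2 : ℝ) ^ (2 * n))⁻¹ := by
  have hnorm (z : Fin n → ℤ) :
      ‖dualLatticeMap B z‖ = √(∑ i, (B⁻¹.transpose.mulVec (fun i => (z i : ℝ)) i) ^ 2) := by
    rw [← norm_dualLatticeMap_sq, sqrt_sq (norm_nonneg _)]
  have hmin (z : Fin n → ℤ) (hz : z ≠ 0) : lam ≤ ‖dualLatticeMap B z‖ :=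
    hlam.2 ⟨z, hz, (hnorm z).symm⟩
  have hlam_pos : 0 < lam := by
    obtain ⟨z, hz, hzlam⟩ := hlam.1
    rw [← hzlam, ← hnorm, norm_pos_iff]
    exact (map_ne_zero_iff _ (dualLatticeMap_injective hB)).2 hz
  have hquarter : ((2 : ℝ) ^ (2 * n))⁻¹ = (1 / 4) ^ n := by
    rw [pow_mul, one_div, inv_pow]; norm_num
  have := tsum_exp_neg_pi_mul_sq_le (by simpa using hn.ne') hlam_pos hmin
  rw [finrank_euclideanSpace_fin] at this
  simpa [hquarter, norm_dualLatticeMap_sq] using this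
end
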